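/- arXiv:1609.01460 — 2 statements merged into one kernel-verified Lean document; each statement's English description precedes it below -/
import Mathlib

section
/- Every column rewriting rule c_u c_v ⇒ c_w c_{w'} (where w, w' are the columns of the Schensted tableau P(uv) and (u,v) is not already a tableau) strictly decreases words with respect to the order ≪; hence the column rewriting system is terminating. -/
/-- A column over `{1,…,n}`: a nonempty strictly decreasing word. -/
def IsColumn (n : ℕ) (w : List ℕ) : Prop :=
  w ≠ [] ∧ w.Chain' (· > ·) ∧ ∀ x ∈ w, 1 ≤ x ∧ x ≤ n

/-- Schensted row insertion of a letter into a row: replace the leftmost entry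
greater than `y` by `y` and bump it, or append `y` at the end of the row. -/
def rowInsert (row : List ℕ) (y : ℕ) : List ℕ × Option ℕ :=
  let j := row.findIdx (fun x => decide (y < x))
  if h : j < row.length then (row.set j y, some (row.get ⟨j, h⟩))
  else (row ++ [y], none)

/-- Schensted insertion of a letter into a tableau (given as its list of rows,
from top to bottom). -/
def tabInsert : List (List ℕ) → ℕ → List (List ℕ)
  | [], y => [[y]]
  | r :: rest, y =>
    match rowInsert r y with
    | (r', none) => r' :: rest
    | (r', some z) => r' :: tabInsert rest z

/-- The Schensted tableau `P(w)` of a word `w`, as a list of rows. -/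
def Schensted (w : List ℕ) : List (List ℕ) := w.foldl tabInsert []

/-- The left column of a tableau, read bottom to top (a decreasing word). -/
def leftCol (t : List (List ℕ)) : List ℕ := (t.map (fun r => r.headD 0)).reverse

/-- The right column of a (two-column) tableau, read bottom to top. -/
def rightCol (t : List (List ℕ)) : List ℕ := (t.filterMap (fun r => r[1]?)).reverse

/-- The word over column generators determined by a tableau with at most two
columns. -/
def outCols (t : List (List ℕ)) : List (List ℕ) :=
  if rightCol t = [] then [leftCol t] else [leftCol t, rightCol t]

/-- Two columns `u = x_p…x_1`, `v = y_q…y_1` form a tableau configuration when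
`q ≤ p` and `x_i ≤ y_i` for all `i ≤ q`. -/
def TabPair (u v : List ℕ) : Prop :=
  v.length ≤ u.length ∧ ∀ i, i < v.length → u.reverse.getD i 0 ≤ v.reverse.getD i 0

/-- The strict order `≺_rev` on columns. -/
def RevLt (u v : List ℕ) : Prop :=
  v.length < u.length ∨ (u.length = v.length ∧ List.Lex (· < ·) u v)

/-- The order `≪` on words over column generators. -/
def ColWordLt (w w' : List (List ℕ)) : Prop :=
  w.length < w'.length ∨ (w.length = w'.length ∧
    ∃ i, i < w.length ∧ RevLt (w.getD i []) (w'.getD i []) ∧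
      ∀ j, j < i → w.getD j [] = w'.getD j [])

/-- One step of the column rewriting system: replace an adjacent non-tableau
pair of columns `c_u c_v` by the columns of the Schensted tableau `P(uv)`. -/
def ColStep (n : ℕ) (w w' : List (List ℕ)) : Prop :=
  ∃ a b u v, IsColumn n u ∧ IsColumn n v ∧ ¬ TabPair u v ∧
    w = a ++ [u, v] ++ b ∧ w' = a ++ outCols (Schensted (u ++ v)) ++ b

/-!
Inserting the letters of `v` one by one into the single column `P(u)` never creates a third
column, since each letter is smaller than the previous one and hence than the second entry of the
first row. Each insertion keeps or lengthens the first column and can only lower its entries, so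
the left column `w` of `P(uv)` satisfies `w = u` or `w ≺_rev u`. If `w = u`, comparing contents
forces the right column to be `v`, so that `(u, v)` are the columns of a tableau: a tableau
configuration. Thus `w ≺_rev u` and the rule decreases `≪`.

For termination, rank the finitely many columns over `{1,…,n}` by `≺_rev`: a rule either shortens
a word or, keeping its length, lowers the sequence of ranks lexicographically.
-/

open scoped List

theorem rowInsert_nil (y : ℕ) : rowInsert [] y = ([y], none) := by
  simp [rowInsert]

theorem rowInsert_singleton (a y : ℕ) :
    rowInsert [a] y = if y < a then ([y], some a) else ([a, y], none) := by
  by_cases h : y < a <;> simp [rowInsert, List.findIdx_cons, h]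

theorem rowInsert_pair (a b y : ℕ) :
    rowInsert [a, b] y =
      if y < a then ([y, b], some a) else if y < b then ([a, y], some b) else ([a, b, y], none) := by
  by_cases h : y < a <;> by_cases h' : y < b <;> simp [rowInsert, List.findIdx_cons, h, h']

theorem rowInsert_perm (r : List ℕ) (y : ℕ) :
    ((rowInsert r y).1 ++ (rowInsert r y).2.toList).Perm (y :: r) := by
  dsimp only [rowInsert]
  split
  case isTrue h =>
    set j := r.findIdx (fun x => decide (y < x))
    calc r.set j y ++ [r[j]] ~ y :: r.eraseIdx j ++ [r[j]] :=
          (List.set_perm_cons_eraseIdx h y).append_right _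
      _ ~ y :: r[j] :: r.eraseIdx j := (List.perm_append_singleton _ _).cons y
      _ ~ y :: r := (List.getElem_cons_eraseIdx_perm h).cons y
  case isFalse => simp [List.perm_append_singleton y r]

theorem rowInsert_ne_nil (r : List ℕ) (y : ℕ) : (rowInsert r y).1 ≠ [] := by
  dsimp only [rowInsert]
  split
  · simpa [← List.length_pos_iff] using Nat.zero_lt_of_lt ‹_›
  · simp

theorem headD_rowInsert_le {r : List ℕ} (hr : r ≠ []) (y : ℕ) :
    (rowInsert r y).1.headD 0 ≤ r.headD 0 := by
  obtain ⟨a, s, rfl⟩ := List.exists_cons_of_ne_nil hr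
  dsimp only [rowInsert]
  by_cases h : y < a
  · simp [List.findIdx_cons, h, h.le]
  · split <;> simp [List.findIdx_cons, h]

theorem mem_getElem?_rowInsert {r : List ℕ} {y x : ℕ} {i : ℕ} (hx : x ∈ (rowInsert r y).1[i]?) :
    x ∈ r[i]? ∨ x = y := by
  dsimp only [rowInsert] at hx
  split at hx
  · simp only [List.getElem?_set] at hx
    split_ifs at hx <;> simp_all
  · simp only [List.getElem?_append] at hx
    split_ifs at hx <;> simp_all [List.getElem?_singleton]

theorem head?_tabInsert (T : List (List ℕ)) (y : ℕ) :
    (tabInsert T y).head? = some (rowInsert (T.headD []) y).1 := by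
  cases T with
  | nil => simp [tabInsert, rowInsert_nil]
  | cons r rest =>
    rw [tabInsert]
    split <;> simp_all

theorem flatten_tabInsert_perm (T : List (List ℕ)) (y : ℕ) :
    (tabInsert T y).flatten ~ y :: T.flatten := by
  induction T generalizing y with
  | nil => simp [tabInsert]
  | cons r rest ih =>
    have hr := rowInsert_perm r y
    rw [tabInsert]
    split
    case _ r' h =>
      rw [h] at hr
      simpa using hr.append_right rest.flatten
    case _ r' z h =>
      rw [h] at hr
      calc (r' :: tabInsert rest z).flatten ~ r' ++ z :: rest.flatten := by
            simpa using (ih z).append_left r'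
        _ ~ (y :: r) ++ rest.flatten := by simpa using hr.append_right rest.flatten
        _ = _ := rfl

theorem flatten_foldl_tabInsert_perm (T : List (List ℕ)) (v : List ℕ) :
    (v.foldl tabInsert T).flatten ~ T.flatten ++ v := by
  induction v generalizing T with
  | nil => simp
  | cons y v ih =>
    calc ((y :: v).foldl tabInsert T).flatten ~ (tabInsert T y).flatten ++ v := ih _
      _ ~ (y :: T.flatten) ++ v := (flatten_tabInsert_perm T y).append_right v
      _ ~ T.flatten ++ y :: v := List.perm_middle.symm

theorem flatten_schensted_perm (w : List ℕ) : (Schensted w).flatten ~ w := by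
  simpa [Schensted] using flatten_foldl_tabInsert_perm [] w

def FirstColLE (T' T : List (List ℕ)) : Prop :=
  T.length ≤ T'.length ∧ ∀ i < T.length, (T'.getD i []).headD 0 ≤ (T.getD i []).headD 0

theorem FirstColLE.refl (T : List (List ℕ)) : FirstColLE T T :=
  ⟨le_rfl, fun _ _ => le_rfl⟩

theorem FirstColLE.trans {T'' T' T : List (List ℕ)} (h₁ : FirstColLE T'' T')
    (h₂ : FirstColLE T' T) : FirstColLE T'' T :=
  ⟨h₂.1.trans h₁.1, fun i hi => (h₁.2 i (hi.trans_le h₂.1)).trans (h₂.2 i hi)⟩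

theorem ne_nil_of_mem_tabInsert {T : List (List ℕ)} (hT : ∀ r ∈ T, r ≠ []) (y : ℕ) :
    ∀ r ∈ tabInsert T y, r ≠ [] := by
  induction T generalizing y with
  | nil => simp [tabInsert]
  | cons r rest ih =>
    have hrest : ∀ s ∈ rest, s ≠ [] := fun s hs => hT s (List.mem_cons_of_mem r hs)
    have hr' := rowInsert_ne_nil r y
    rw [tabInsert]
    split
    · simp_all
    · next z _ => have := ih hrest z; simp_all

theorem firstColLE_tabInsert {T : List (List ℕ)} (hT : ∀ r ∈ T, r ≠ []) (y : ℕ) :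
    FirstColLE (tabInsert T y) T := by
  induction T generalizing y with
  | nil => simp [FirstColLE]
  | cons r rest ih =>
    have hrest := ih (fun s hs => hT s (List.mem_cons_of_mem r hs))
    have hr := headD_rowInsert_le (hT r List.mem_cons_self) y
    rw [tabInsert]
    split
    case _ r' h =>
      rw [h] at hr
      refine ⟨by simp, fun i hi => ?_⟩
      cases i <;> simp_all
    case _ r' z h =>
      rw [h] at hr
      refine ⟨by simpa using (hrest z).1, fun i hi => ?_⟩
      cases i with
      | zero => simpa using hr
      | succ i => simpa using (hrest z).2 i (by simpa using hi)

theorem firstColLE_foldl_tabInsert {T : List (List ℕ)} (hT : ∀ r ∈ T, r ≠ []) (v : List ℕ) :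
    FirstColLE (v.foldl tabInsert T) T := by
  induction v generalizing T with
  | nil => exact .refl T
  | cons y v ih =>
    exact (ih (ne_nil_of_mem_tabInsert hT y)).trans (firstColLE_tabInsert hT y)

theorem List.lex_lt_of_forall₂_le {α : Type*} [PartialOrder α] {l l' : List α}
    (h : List.Forall₂ (· ≤ ·) l l') (hne : l ≠ l') : List.Lex (· < ·) l l' := by
  induction h with
  | nil => exact absurd rfl hne
  | @cons a b l l' hab _ ih =>
    rcases hab.lt_or_eq with hab | rfl
    · exact .rel hab
    · exact .cons (ih fun h => hne (h ▸ rfl))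

theorem FirstColLE.revLt_leftCol {T' T : List (List ℕ)} (h : FirstColLE T' T)
    (hne : leftCol T' ≠ leftCol T) : RevLt (leftCol T') (leftCol T) := by
  rcases h.1.lt_or_eq with hlt | heq
  · left
    simpa [leftCol] using hlt
  · right
    refine ⟨by simp [leftCol, heq], List.lex_lt_of_forall₂_le ?_ hne⟩
    refine List.forall₂_reverse_iff.2 (List.forall₂_iff_get.2 ⟨by simp [heq], fun i hi _ => ?_⟩)
    have hi' : i < T'.length := by simpa using hi
    have := h.2 i (heq ▸ hi')
    simp_all

def TwoColRow : List ℕ → Prop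
  | [_] => True
  | [a, b] => a ≤ b
  | _ => False

def RowAbove : List ℕ → List ℕ → Prop
  | [a], [a'] => a < a'
  | [a, _], [a'] => a < a'
  | [a, b], [a', b'] => a < a' ∧ b < b'
  | _, _ => False

structure IsTwoColTableau (T : List (List ℕ)) : Prop where
  row : ∀ r ∈ T, TwoColRow r
  chain : T.IsChain RowAbove

theorem TwoColRow.cases {r : List ℕ} (h : TwoColRow r) :
    (∃ a, r = [a]) ∨ ∃ a b, r = [a, b] ∧ a ≤ b := by
  match r, h with
  | [a], _ => exact .inl ⟨a, rfl⟩
  | [a, b], h => exact .inr ⟨a, b, rfl, h⟩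

theorem RowAbove.headD_lt {r s : List ℕ} (h : RowAbove r s) : r.headD 0 < s.headD 0 := by
  match r, s, h with
  | [_], [_], h | [_, _], [_], h => exact h
  | [_, _], [_, _], h => exact h.1

theorem twoColRow_rowInsert {r : List ℕ} {y : ℕ} (hr : TwoColRow r) (hy : ∀ b ∈ r[1]?, y < b) :
    TwoColRow (rowInsert r y).1 := by
  rcases hr.cases with ⟨a, rfl⟩ | ⟨a, b, rfl, hab⟩
  · rw [rowInsert_singleton]; split_ifs <;> simp_all [TwoColRow]
  · have := hy b (by simp)
    rw [rowInsert_pair]; split_ifs <;> simp [TwoColRow] <;> omega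

theorem rowAbove_rowInsert_of_none {r s r' : List ℕ} {y : ℕ} (hr : TwoColRow r) (hs : TwoColRow s)
    (hrs : RowAbove r s) (hy : ∀ b ∈ r[1]?, y < b) (h : rowInsert r y = (r', none)) :
    RowAbove r' s := by
  rcases hr.cases with ⟨a, rfl⟩ | ⟨a, b, rfl, hab⟩ <;>
    rcases hs.cases with ⟨a', rfl⟩ | ⟨a', b', rfl, hab'⟩ <;>
    simp only [rowInsert_singleton, rowInsert_pair] at h <;>
    split_ifs at h <;> cases h <;> simp_all [RowAbove]

theorem rowAbove_rowInsert_of_some {r s r' : List ℕ} {y z : ℕ} (hr : TwoColRow r)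
    (hs : s = [] ∨ TwoColRow s ∧ RowAbove r s) (hy : ∀ b ∈ r[1]?, y < b)
    (h : rowInsert r y = (r', some z)) :
    RowAbove r' (rowInsert s z).1 ∧ ∀ b ∈ s[1]?, z < b := by
  rcases hr.cases with ⟨a, rfl⟩ | ⟨a, b, rfl, hab⟩ <;> rcases hs with rfl | ⟨hs, hrs⟩
  all_goals
    (try rcases hs.cases with ⟨a', rfl⟩ | ⟨a', b', rfl, hab'⟩) <;>
    simp only [rowInsert_singleton, rowInsert_pair, rowInsert_nil] at h ⊢ <;>
    split_ifs at h ⊢ <;> cases h <;> simp_all [RowAbove] <;> omega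

namespace IsTwoColTableau

variable {T : List (List ℕ)}

theorem tail {r : List ℕ} (hT : IsTwoColTableau (r :: T)) : IsTwoColTableau T :=
  ⟨fun s hs => hT.row s (List.mem_cons_of_mem r hs), hT.chain.tail⟩

theorem map_singleton {l : List ℕ} (hl : l.IsChain (· < ·)) : IsTwoColTableau (l.map ([·])) :=
  ⟨by simp [TwoColRow], (List.isChain_map _).2 (hl.imp fun _ _ h => h)⟩

theorem leftCol_isChain (hT : IsTwoColTableau T) : (leftCol T).IsChain (· > ·) :=
  List.isChain_reverse.2 ((List.isChain_map _).2 (hT.chain.imp fun _ _ h => h.headD_lt))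

theorem filterMap_eq_nil_of_singleton {a : ℕ} (hT : IsTwoColTableau ([a] :: T)) :
    T.filterMap (·[1]?) = [] := by
  induction T generalizing a with
  | nil => rfl
  | cons s rest ih =>
    have hs : RowAbove [a] s := (List.isChain_cons_cons.1 hT.chain).1
    rcases (hT.row s (by simp)).cases with ⟨a', rfl⟩ | ⟨a', b', rfl, -⟩
    · simpa using ih hT.tail
    · exact hs.elim

theorem rightCol_isChain (hT : IsTwoColTableau T) : (rightCol T).IsChain (· > ·) := by
  refine List.isChain_reverse.2 ?_
  induction T with
  | nil => simp
  | cons r rest ih =>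
    rcases (hT.row r (by simp)).cases with ⟨a, rfl⟩ | ⟨a, b, rfl, -⟩
    · simp [hT.filterMap_eq_nil_of_singleton]
    · refine List.isChain_cons.2 ⟨fun x hx => ?_, ih hT.tail⟩
      rcases rest with _ | ⟨s, rest⟩
      · simp at hx
      have hs : RowAbove [a, b] s := (List.isChain_cons_cons.1 hT.chain).1
      rcases (hT.tail.row s (by simp)).cases with ⟨a', rfl⟩ | ⟨a', b', rfl, -⟩
      · simp [hT.tail.filterMap_eq_nil_of_singleton] at hx
      · simp at hx
        exact hx ▸ hs.2

theorem tabPair (hT : IsTwoColTableau T) : TabPair (leftCol T) (rightCol T) := by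
  simp only [TabPair, leftCol, rightCol, List.reverse_reverse, List.length_reverse]
  induction T with
  | nil => simp
  | cons r rest ih =>
    rcases (hT.row r (by simp)).cases with ⟨a, rfl⟩ | ⟨a, b, rfl, hab⟩
    · simp [hT.filterMap_eq_nil_of_singleton]
    · obtain ⟨hlen, hle⟩ := ih hT.tail
      refine ⟨by simpa using hlen, fun i hi => ?_⟩
      cases i with
      | zero => simpa using hab
      | succ i => simpa using hle i (by simpa using hi)

theorem flatten_perm (hT : IsTwoColTableau T) : T.flatten ~ leftCol T ++ rightCol T := by
  refine List.Perm.trans ?_ ((List.reverse_perm _).append (List.reverse_perm _)).symm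
  induction T with
  | nil => simp
  | cons r rest ih =>
    rcases (hT.row r (by simp)).cases with ⟨a, rfl⟩ | ⟨a, b, rfl, -⟩
    · simpa using ih hT.tail
    · simpa using ((ih hT.tail).cons b).trans List.perm_middle.symm

end IsTwoColTableau

theorem isTwoColTableau_tabInsert {T : List (List ℕ)} (hT : IsTwoColTableau T) {y : ℕ}
    (hy : ∀ b ∈ (T.headD [])[1]?, y < b) : IsTwoColTableau (tabInsert T y) := by
  induction T generalizing y with
  | nil => exact ⟨by simp [tabInsert, TwoColRow], by simp [tabInsert]⟩
  | cons r rest ih =>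
    have hr := hT.row r (by simp)
    have hrs : ∀ s ∈ rest.head?, RowAbove r s := (List.isChain_cons.1 hT.chain).1
    simp only [List.headD_cons] at hy
    have hr' := twoColRow_rowInsert hr hy
    rw [tabInsert]
    split
    case _ r' h =>
      rw [h] at hr'
      refine ⟨by simpa [hr'] using hT.tail.row, List.isChain_cons.2 ⟨fun s hs => ?_, hT.tail.chain⟩⟩
      exact rowAbove_rowInsert_of_none hr (hT.tail.row s (List.mem_of_mem_head? hs)) (hrs s hs) hy h
    case _ r' z h =>
      rw [h] at hr'
      have hs : rest.headD [] = [] ∨ TwoColRow (rest.headD []) ∧ RowAbove r (rest.headD []) := by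
        rcases rest with _ | ⟨s, rest⟩
        · exact .inl rfl
        · exact .inr ⟨hT.tail.row s (by simp), hrs s rfl⟩
      obtain ⟨habove, hz⟩ := rowAbove_rowInsert_of_some hr hs hy h
      have hrest := ih hT.tail hz
      refine ⟨by simpa [hr'] using hrest.row, List.isChain_cons.2 ⟨fun s hs => ?_, hrest.chain⟩⟩
      rw [head?_tabInsert, Option.mem_some_iff] at hs
      exact hs ▸ habove

theorem isTwoColTableau_foldl_tabInsert {T : List (List ℕ)} (hT : IsTwoColTableau T) {v : List ℕ}
    (hv : v.IsChain (· > ·)) (hvT : ∀ y ∈ v, ∀ b ∈ (T.headD [])[1]?, y < b) :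
    IsTwoColTableau (v.foldl tabInsert T) := by
  induction v generalizing T with
  | nil => exact hT
  | cons y v ih =>
    refine ih (isTwoColTableau_tabInsert hT (hvT y (by simp))) hv.tail fun z hz b hb => ?_
    rw [List.headD_eq_head?_getD, head?_tabInsert, Option.getD_some] at hb
    rcases mem_getElem?_rowInsert hb with hb | rfl
    · exact hvT z (List.mem_cons_of_mem y hz) b hb
    · exact List.rel_of_pairwise_cons (List.isChain_iff_pairwise.1 hv) hz

theorem schensted_append (u v : List ℕ) : Schensted (u ++ v) = v.foldl tabInsert (Schensted u) :=
  List.foldl_append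

theorem ne_nil_of_mem_schensted (w : List ℕ) : ∀ r ∈ Schensted w, r ≠ [] := by
  induction w using List.reverseRecOn with
  | nil => simp [Schensted]
  | append_singleton w x ih => simpa [schensted_append] using ne_nil_of_mem_tabInsert ih x

theorem firstColLE_schensted_append (u v : List ℕ) :
    FirstColLE (Schensted (u ++ v)) (Schensted u) :=
  schensted_append u v ▸ firstColLE_foldl_tabInsert (ne_nil_of_mem_schensted u) v

theorem tabInsert_map_singleton {l : List ℕ} {y : ℕ} (h : (y :: l).IsChain (· < ·)) :
    tabInsert (l.map ([·])) y = (y :: l).map ([·]) := by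
  induction l generalizing y with
  | nil => rfl
  | cons z l ih =>
    obtain ⟨hyz, hl⟩ := List.isChain_cons_cons.1 h
    simp [tabInsert, rowInsert_singleton, hyz, ih hl]

theorem schensted_of_isChain {u : List ℕ} (hu : u.IsChain (· > ·)) :
    Schensted u = u.reverse.map ([·]) := by
  induction u using List.reverseRecOn with
  | nil => rfl
  | append_singleton u x ih =>
    rw [schensted_append, ih hu.left_of_append, List.foldl_cons, List.foldl_nil,
      tabInsert_map_singleton (by simpa using List.isChain_reverse.2 hu)]
    simp

theorem leftCol_schensted_of_isChain {u : List ℕ} (hu : u.IsChain (· > ·)) :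
    leftCol (Schensted u) = u := by
  simp [schensted_of_isChain hu, leftCol, Function.comp_def]

section TwoColumns

variable {u v : List ℕ}

theorem isTwoColTableau_schensted_append (hu : u.IsChain (· > ·)) (hv : v.IsChain (· > ·)) :
    IsTwoColTableau (Schensted (u ++ v)) := by
  rw [schensted_append, schensted_of_isChain hu]
  refine isTwoColTableau_foldl_tabInsert (.map_singleton (List.isChain_reverse.2 hu)) hv
    fun y _ b hb => ?_
  revert hb
  generalize u.reverse = l
  cases l <;> simp

theorem rightCol_schensted_append_of_leftCol (hu : u.IsChain (· > ·)) (hv : v.IsChain (· > ·))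
    (hL : leftCol (Schensted (u ++ v)) = u) : rightCol (Schensted (u ++ v)) = v := by
  have hP := isTwoColTableau_schensted_append hu hv
  have hperm := hP.flatten_perm.symm.trans (flatten_schensted_perm _)
  rw [hL] at hperm
  exact ((List.perm_append_left_iff u).1 hperm).eq_of_pairwise'
    (List.isChain_iff_pairwise.1 hP.rightCol_isChain) (List.isChain_iff_pairwise.1 hv)

theorem revLt_leftCol_schensted_append (hu : u.IsChain (· > ·)) (hv : v.IsChain (· > ·))
    (h : ¬ TabPair u v) : RevLt (leftCol (Schensted (u ++ v))) u := by
  have hne : leftCol (Schensted (u ++ v)) ≠ leftCol (Schensted u) := by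
    rw [leftCol_schensted_of_isChain hu]
    intro hL
    have hpair := (isTwoColTableau_schensted_append hu hv).tabPair
    rw [hL, rightCol_schensted_append_of_leftCol hu hv hL] at hpair
    exact h hpair
  simpa [leftCol_schensted_of_isChain hu] using
    (firstColLE_schensted_append u v).revLt_leftCol hne

end TwoColumns

theorem colWordLt_outCols_schensted {n : ℕ} {u v : List ℕ} (hu : IsColumn n u) (hv : IsColumn n v)
    (h : ¬ TabPair u v) : ColWordLt (outCols (Schensted (u ++ v))) [u, v] := by
  unfold outCols
  split_ifs
  · left; simp
  · right
    exact ⟨rfl, 0, by simp, by simpa using revLt_leftCol_schensted_append hu.2.1 hv.2.1 h,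
      by simp⟩

theorem isColumn_leftCol_schensted_append {n : ℕ} {u v : List ℕ} (hu : IsColumn n u)
    (hv : IsColumn n v) : IsColumn n (leftCol (Schensted (u ++ v))) := by
  have hP := isTwoColTableau_schensted_append hu.2.1 hv.2.1
  refine ⟨fun hL => hu.1 ?_, hP.leftCol_isChain, fun x hx => ?_⟩
  · have hlen := (firstColLE_schensted_append u v).1
    rw [schensted_of_isChain hu.2.1] at hlen
    simp_all [leftCol]
  · have hx' : x ∈ u ++ v :=
      (hP.flatten_perm.symm.trans (flatten_schensted_perm _)).subset (by simp [hx])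
    rcases List.mem_append.1 hx' with hx' | hx'
    exacts [hu.2.2 x hx', hv.2.2 x hx']

theorem RevLt.trans {a b c : List ℕ} (h₁ : RevLt a b) (h₂ : RevLt b c) : RevLt a c := by
  rcases h₁ with h₁ | ⟨e₁, l₁⟩ <;> rcases h₂ with h₂ | ⟨e₂, l₂⟩
  · exact .inl (h₂.trans h₁)
  · exact .inl (e₂ ▸ h₁)
  · exact .inl (e₁ ▸ h₂)
  · exact .inr ⟨e₁.trans e₂, List.lex_trans lt_trans l₁ l₂⟩

theorem RevLt.irrefl (a : List ℕ) : ¬ RevLt a a := by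
  rintro (h | ⟨-, h⟩)
  exacts [lt_irrefl _ h, _root_.irrefl _ h]

def allColumns (n : ℕ) : Finset (List ℕ) :=
  (Finset.Icc 1 n).powerset.image (·.sort (· ≥ ·))

theorem mem_allColumns {n : ℕ} {c : List ℕ} (hc : IsColumn n c) : c ∈ allColumns n := by
  classical
  have hc' : c.Pairwise (· > ·) := List.isChain_iff_pairwise.1 hc.2.1
  refine Finset.mem_image.2 ⟨c.toFinset, Finset.mem_powerset.2 fun x hx => ?_, ?_⟩
  · exact Finset.mem_Icc.2 (hc.2.2 x (List.mem_toFinset.1 hx))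
  · exact (List.toFinset_sort _ (hc'.imp ne_of_gt)).2 (hc'.imp le_of_lt)

open Classical in
noncomputable def colRank (n : ℕ) (c : List ℕ) : ℕ :=
  ((allColumns n).filter (RevLt · c)).card

theorem colRank_lt_colRank {n : ℕ} {c c' : List ℕ} (hc : c ∈ allColumns n) (h : RevLt c c') :
    colRank n c < colRank n c' := by
  classical
  unfold colRank
  refine Finset.card_lt_card ⟨fun d hd => ?_, fun hsub => RevLt.irrefl c ?_⟩
  · simp only [Finset.mem_filter] at hd ⊢
    exact ⟨hd.1, hd.2.trans h⟩
  · exact (Finset.mem_filter.1 (hsub (Finset.mem_filter.2 ⟨hc, h⟩))).2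

theorem toColex_toFinsupp_reverse_lt {p t t' : List ℕ} {a b : ℕ} (hab : a < b)
    (ht : t.length = t'.length) :
    toColex (p ++ a :: t).reverse.toFinsupp < toColex (p ++ b :: t').reverse.toFinsupp := by
  refine Finsupp.Colex.lt_iff.2 ⟨t.length, fun j hj => ?_, ?_⟩
  · obtain ⟨k, rfl⟩ := Nat.exists_eq_add_of_lt hj
    simp [List.toFinsupp_apply, List.getElem?_append, ht, Nat.add_assoc]
  · simpa [List.toFinsupp_apply, ht] using hab

/-- Colex order on the reversed list of column ranks is the lexicographic order on the ranks read
left to right, as `≪` requires. -/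
noncomputable def wordMeasure (n : ℕ) (w : List (List ℕ)) : ℕ ×ₗ Colex (ℕ →₀ ℕ) :=
  toLex (w.length, toColex (w.map (colRank n)).reverse.toFinsupp)

theorem ColStep.wordMeasure_lt {n : ℕ} {w w' : List (List ℕ)} (h : ColStep n w w') :
    wordMeasure n w' < wordMeasure n w := by
  obtain ⟨p, s, u, v, hu, hv, huv, rfl, rfl⟩ := h
  refine Prod.Lex.toLex_lt_toLex.2 ?_
  unfold outCols
  split_ifs
  · left; simp
  · right
    refine ⟨by simp, ?_⟩
    have hrank := colRank_lt_colRank (mem_allColumns (isColumn_leftCol_schensted_append hu hv))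
      (revLt_leftCol_schensted_append hu.2.1 hv.2.1 huv)
    simpa using toColex_toFinsupp_reverse_lt (p := p.map (colRank n))
      (t := colRank n (rightCol (Schensted (u ++ v))) :: s.map (colRank n))
      (t' := colRank n v :: s.map (colRank n)) hrank (by simp)

/-- Every column rewriting rule `c_u c_v ⇒ c_w c_{w'}` strictly decreases
words with respect to `≪`; hence the column rewriting system terminates. -/
theorem colStep_decreases_and_terminates (n : ℕ) :
    (∀ u v : List ℕ, IsColumn n u → IsColumn n v → ¬ TabPair u v →
      ColWordLt (outCols (Schensted (u ++ v))) [u, v]) ∧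
    WellFounded (fun a b : List (List ℕ) => ColStep n b a) :=
  ⟨fun _ _ => colWordLt_outCols_schensted,
    Subrelation.wf ColStep.wordMeasure_lt (InvImage.wf (wordMeasure n) wellFounded_lt)⟩
end

section
/- The number of 2-cells of the column presentation of P_n equals (2^n - 1)^2 minus (T_2(n) - T_1(n)), where T_q(n) = ∏_{1 ≤ i ≤ j ≤ n} (q + i + j - 1)/(i + j - 1) is the number of semistandard tableaux with at most q columns and entries in {1,...,n}. In particular, the number of pairs of columns (u,v) over {1,...,n} that form a tableau configuration equals T_2(n) - T_1(n). -/
/-- Gordon's number `T_q(n) = ∏_{1 ≤ i ≤ j ≤ n} (q+i+j-1)/(i+j-1)`, the number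
of semistandard tableaux with at most `q` columns and entries in `{1,…,n}`. -/
noncomputable def gordon (n q : ℕ) : ℚ :=
  ∏ p ∈ (Finset.Icc 1 n ×ˢ Finset.Icc 1 n).filter (fun p => p.1 ≤ p.2),
    (((q : ℚ) + p.1 + p.2 - 1) / ((p.1 : ℚ) + p.2 - 1))

/-!
A column is the decreasing listing of its set of entries, and two columns with entry sets `S`, `T`
form a tableau configuration exactly when `S` dominates `T`: every initial segment `{1, …, k}`
contains at least as many elements of `S` as of `T`. Recording for each `k` whether it lies in `S`
and/or in `T` makes a dominating pair a lattice path staying at height `≥ 0` and ending at height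
`d = |S| - |T|`. Removing the letter `n + 1` gives the recursion
`N(n+1, d) = 2 N(n, d) + N(n, d+1) + N(n, d-1)`, solved by the ballot numbers
`N(n, d) = C(2n, n+d) - C(2n, n+d+2)`. The sum over `d` telescopes to
`C(2n, n) + C(2n, n+1) = C(2n+1, n)` dominating pairs, `2^n` of which have `T = ∅`.
On the other side, the factors of Gordon's product telescope to `T_1(n) = 2^n` and
`T_2(n) = C(2n+1, n)`.
-/

open Finset

def Dominates (S T : Finset ℕ) : Prop :=
  ∀ k, #{x ∈ T | x ≤ k} ≤ #{x ∈ S | x ≤ k}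

theorem filter_le_eq_self {S : Finset ℕ} {m k : ℕ} (hS : S ⊆ Iic m) (hk : m ≤ k) :
    {x ∈ S | x ≤ k} = S :=
  filter_true_of_mem fun _ hx => (mem_Iic.mp (hS hx)).trans hk

theorem Dominates.card_le {S T : Finset ℕ} (h : Dominates S T) : #T ≤ #S := by
  set m := (S ∪ T).sup id
  have hS : S ⊆ Iic m := fun _ hx => mem_Iic.mpr (le_sup (f := id) (mem_union_left T hx))
  have hT : T ⊆ Iic m := fun _ hx => mem_Iic.mpr (le_sup (f := id) (mem_union_right S hx))
  simpa only [filter_le_eq_self hS le_rfl, filter_le_eq_self hT le_rfl] using h m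

theorem dominates_iff_of_subset_Iic_succ {n : ℕ} {S T : Finset ℕ} (hS : S ⊆ Iic (n + 1))
    (hT : T ⊆ Iic (n + 1)) :
    Dominates S T ↔ Dominates {x ∈ S | x ≤ n} {x ∈ T | x ≤ n} ∧ #T ≤ #S := by
  have filter_filter_le (X : Finset ℕ) (k : ℕ) :
      {x ∈ {x ∈ X | x ≤ n} | x ≤ k} = {x ∈ X | x ≤ min n k} := by
    rw [filter_filter]; simp only [le_min_iff]
  refine ⟨fun h => ⟨fun k => ?_, h.card_le⟩, fun ⟨h, hcard⟩ k => ?_⟩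
  · simpa only [filter_filter_le] using h (min n k)
  · rcases le_or_gt k n with hk | hk
    · simpa only [filter_filter_le, min_eq_right hk] using h k
    · rwa [filter_le_eq_self hS hk, filter_le_eq_self hT hk]

theorem sort_getD_le_iff (S : Finset ℕ) {i : ℕ} (hi : i < #S) (k : ℕ) :
    S.sort.getD i 0 ≤ k ↔ i < #{x ∈ S | x ≤ k} := by
  have hf : (Set.ofPred (· ∈ S)).Finite := S.finite_toSet
  have hS : hf.toFinset = S := by ext; simp
  have hcount (m : ℕ) : Nat.count (· ∈ S) (m + 1) = #{x ∈ S | x ≤ m} := by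
    rw [Nat.count_eq_card_filter_range]
    congr 1; ext x; simp [and_comm]
  have hi' : i < #hf.toFinset := by rwa [hS]
  rw [← hS, ← Nat.nth_eq_getD_sort hf, hS, ← hcount]
  constructor
  · intro h
    calc i < i + 1 := i.lt_succ_self
      _ = Nat.count (· ∈ S) (Nat.nth (· ∈ S) i + 1) := (Nat.count_nth_succ fun _ => hi').symm
      _ ≤ _ := Nat.count_monotone _ (Nat.succ_le_succ h)
  · exact fun h => Nat.lt_succ_iff.mp (Nat.nth_lt_of_lt_count h)

def colList (S : Finset ℕ) : List ℕ := S.sort.reverse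

theorem colList_injective : Function.Injective colList := fun S T h => by
  simpa only [colList, List.reverse_inj, List.toFinset_reverse, sort_toFinset] using
    congrArg List.toFinset h

def columnSets (n : ℕ) : Finset (Finset ℕ) := (Icc 1 n).powerset.erase ∅

theorem card_columnSets (n : ℕ) : #(columnSets n) = 2 ^ n - 1 := by
  rw [columnSets, card_erase_of_mem (empty_mem_powerset _), card_powerset, Nat.card_Icc,
    Nat.add_sub_cancel]

theorem isColumn_iff {n : ℕ} {w : List ℕ} :
    IsColumn n w ↔ ∃ S ∈ columnSets n, colList S = w := by
  simp only [columnSets, mem_erase, mem_powerset]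
  constructor
  · rintro ⟨hne, hchain, hmem⟩
    have hlt : w.reverse.Pairwise (· < ·) :=
      List.pairwise_reverse.mpr (List.isChain_iff_pairwise.mp hchain)
    refine ⟨w.toFinset, ⟨by simpa using hne, fun x hx => mem_Icc.mpr
      (hmem x (List.mem_toFinset.mp hx))⟩, ?_⟩
    rw [colList, ← List.toFinset_reverse, (List.toFinset_sort _ hlt.nodup).mpr
      (hlt.imp le_of_lt), List.reverse_reverse]
  · rintro ⟨S, ⟨hne, hS⟩, rfl⟩
    refine ⟨by simpa [colList, ← List.length_eq_zero_iff] using hne, ?_, fun x hx => ?_⟩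
    · exact List.isChain_iff_pairwise.mpr (List.pairwise_reverse.mpr (sortedLT_sort S).pairwise)
    · exact mem_Icc.mp (hS (by simpa [colList] using hx))

theorem tabPair_colList_iff (S T : Finset ℕ) :
    TabPair (colList S) (colList T) ↔ Dominates S T := by
  simp only [TabPair, colList, List.reverse_reverse, List.length_reverse, length_sort]
  refine ⟨fun ⟨hcard, h⟩ k => ?_, fun h => ⟨h.card_le, fun i hi => ?_⟩⟩
  · by_contra! hlt
    have hi : #{x ∈ S | x ≤ k} < #T := hlt.trans_le (card_le_card (filter_subset _ _))
    have hT := (sort_getD_le_iff T hi k).mpr hlt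
    exact lt_irrefl _ ((sort_getD_le_iff S (hi.trans_le hcard) k).mp ((h _ hi).trans hT))
  · rw [sort_getD_le_iff S (hi.trans_le h.card_le)]
    exact ((sort_getD_le_iff T hi _).mp le_rfl).trans_le (h _)

open Classical in
theorem ncard_columnPairs (n : ℕ) (Q : List ℕ → List ℕ → Prop) :
    {p : List ℕ × List ℕ | IsColumn n p.1 ∧ IsColumn n p.2 ∧ Q p.1 p.2}.ncard
      = #{q ∈ columnSets n ×ˢ columnSets n | Q (colList q.1) (colList q.2)} := by
  have : {p : List ℕ × List ℕ | IsColumn n p.1 ∧ IsColumn n p.2 ∧ Q p.1 p.2}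
      = Prod.map colList colList '' ↑({q ∈ columnSets n ×ˢ columnSets n |
          Q (colList q.1) (colList q.2)} : Finset _) := by
    ext ⟨u, v⟩
    simp only [Set.mem_ofPred_eq, isColumn_iff, coe_filter, mem_product, Set.mem_image,
      Prod.exists, Prod.map, Prod.mk.injEq]
    constructor
    · rintro ⟨⟨S, hS, rfl⟩, ⟨T, hT, rfl⟩, hQ⟩
      exact ⟨S, T, ⟨⟨hS, hT⟩, hQ⟩, rfl, rfl⟩
    · rintro ⟨S, T, ⟨⟨hS, hT⟩, hQ⟩, rfl, rfl⟩
      exact ⟨⟨S, hS, rfl⟩, ⟨T, hT, rfl⟩, hQ⟩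
  rw [this, Set.ncard_image_of_injective _ (colList_injective.prodMap colList_injective),
    Set.ncard_coe_finset]

section AddTop

variable {n : ℕ} {X : Finset ℕ}

def addTop (n : ℕ) (a : Bool) (X : Finset ℕ) : Finset ℕ :=
  if a then insert (n + 1) X else X

theorem add_one_notMem_of_subset_Icc (hX : X ⊆ Icc 1 n) : n + 1 ∉ X := fun h => by
  have := (mem_Icc.mp (hX h)).2; omega

theorem add_one_mem_addTop_iff (a : Bool) (hX : X ⊆ Icc 1 n) : n + 1 ∈ addTop n a X ↔ a := by
  cases a <;> simp [addTop, add_one_notMem_of_subset_Icc hX]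

theorem card_addTop (a : Bool) (hX : X ⊆ Icc 1 n) : #(addTop n a X) = #X + a.toNat := by
  cases a <;> simp [addTop, add_one_notMem_of_subset_Icc hX]

theorem addTop_subset (a : Bool) (hX : X ⊆ Icc 1 n) : addTop n a X ⊆ Icc 1 (n + 1) := by
  have := hX.trans (Icc_subset_Icc_right n.le_succ)
  cases a <;> simp [addTop, insert_subset_iff, this]

theorem filter_addTop (a : Bool) (hX : X ⊆ Icc 1 n) : {x ∈ addTop n a X | x ≤ n} = X := by
  have hX' : X ⊆ Iic n := hX.trans Icc_subset_Iic_self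
  cases a <;> simp [addTop, filter_insert, filter_le_eq_self hX' le_rfl]

theorem filter_le_subset_Icc (hX : X ⊆ Icc 1 (n + 1)) : {x ∈ X | x ≤ n} ⊆ Icc 1 n :=
  fun x hx => by
    obtain ⟨hxX, hxn⟩ := mem_filter.mp hx
    exact mem_Icc.mpr ⟨(mem_Icc.mp (hX hxX)).1, hxn⟩

theorem addTop_filter_le (hX : X ⊆ Icc 1 (n + 1)) :
    addTop n (decide (n + 1 ∈ X)) {x ∈ X | x ≤ n} = X := by
  have hle (x : ℕ) (hx : x ∈ X) : x ≤ n ∨ x = n + 1 := by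
    have := mem_Icc.mp (hX hx); omega
  ext x
  by_cases h : n + 1 ∈ X
  · simp only [addTop, h, decide_true, if_true, mem_insert, mem_filter]
    constructor
    · rintro (rfl | ⟨hx, -⟩) <;> assumption
    · intro hx
      rcases hle x hx with hxn | rfl
      exacts [Or.inr ⟨hx, hxn⟩, Or.inl rfl]
  · simp only [addTop, h, decide_false, Bool.false_eq_true, if_false, mem_filter]
    refine ⟨And.left, fun hx => ⟨hx, ?_⟩⟩
    rcases hle x hx with hxn | rfl
    exacts [hxn, absurd hx h]

end AddTop

open Classical in
noncomputable def dominatingPairs (n : ℕ) : Finset (Finset ℕ × Finset ℕ) :=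
  {p ∈ (Icc 1 n).powerset ×ˢ (Icc 1 n).powerset | Dominates p.1 p.2}

noncomputable def excessPairs (n d : ℕ) : Finset (Finset ℕ × Finset ℕ) :=
  {p ∈ dominatingPairs n | #p.1 = #p.2 + d}

theorem mem_dominatingPairs {n : ℕ} {p : Finset ℕ × Finset ℕ} :
    p ∈ dominatingPairs n ↔ p.1 ⊆ Icc 1 n ∧ p.2 ⊆ Icc 1 n ∧ Dominates p.1 p.2 := by
  simp [dominatingPairs, and_assoc]

theorem dominatingPairs_zero : dominatingPairs 0 = {(∅, ∅)} := by
  ext ⟨S, T⟩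
  simp only [mem_dominatingPairs, Icc_eq_empty_of_lt zero_lt_one, subset_empty, mem_singleton,
    Prod.mk.injEq]
  exact ⟨fun h => ⟨h.1, h.2.1⟩, fun ⟨hS, hT⟩ => ⟨hS, hT, fun k => by simp [hS, hT]⟩⟩

theorem dominates_addTop_iff {n : ℕ} {S T : Finset ℕ} (a b : Bool) (hS : S ⊆ Icc 1 n)
    (hT : T ⊆ Icc 1 n) :
    Dominates (addTop n a S) (addTop n b T) ↔
      Dominates S T ∧ #T + b.toNat ≤ #S + a.toNat := by
  rw [dominates_iff_of_subset_Iic_succ ((addTop_subset a hS).trans Icc_subset_Iic_self)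
    ((addTop_subset b hT).trans Icc_subset_Iic_self), filter_addTop a hS, filter_addTop b hT,
    card_addTop a hS, card_addTop b hT]

theorem card_filter_excessPairs_succ (n d : ℕ) (a b : Bool) :
    #{p ∈ excessPairs (n + 1) d | (decide (n + 1 ∈ p.1), decide (n + 1 ∈ p.2)) = (a, b)}
      = #{p ∈ dominatingPairs n | #p.1 + a.toNat = #p.2 + b.toNat + d} := by
  rw [excessPairs, filter_filter]
  refine card_nbij' (fun p => ({x ∈ p.1 | x ≤ n}, {x ∈ p.2 | x ≤ n}))
    (fun p => (addTop n a p.1, addTop n b p.2)) ?_ ?_ ?_ ?_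
  · rintro ⟨S, T⟩ hp
    simp only [coe_filter, Set.mem_ofPred_eq, mem_dominatingPairs, Prod.mk.injEq] at hp ⊢
    obtain ⟨⟨hS, hT, hdom⟩, hcard, ⟨rfl, rfl⟩⟩ := hp
    have hcS := card_addTop (decide (n + 1 ∈ S)) (filter_le_subset_Icc hS)
    have hcT := card_addTop (decide (n + 1 ∈ T)) (filter_le_subset_Icc hT)
    rw [addTop_filter_le hS] at hcS
    rw [addTop_filter_le hT] at hcT
    refine ⟨⟨filter_le_subset_Icc hS, filter_le_subset_Icc hT,
      ((dominates_iff_of_subset_Iic_succ (hS.trans Icc_subset_Iic_self)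
        (hT.trans Icc_subset_Iic_self)).mp hdom).1⟩, by omega⟩
  · rintro ⟨S, T⟩ hp
    simp only [coe_filter, Set.mem_ofPred_eq, mem_dominatingPairs] at hp ⊢
    obtain ⟨⟨hS, hT, hdom⟩, hcard⟩ := hp
    refine ⟨⟨addTop_subset a hS, addTop_subset b hT, (dominates_addTop_iff a b hS hT).mpr
      ⟨hdom, by omega⟩⟩, ?_, by simp [add_one_mem_addTop_iff, hS, hT]⟩
    rw [card_addTop a hS, card_addTop b hT]
    omega
  · rintro ⟨S, T⟩ hp
    simp only [coe_filter, Set.mem_ofPred_eq, mem_dominatingPairs, Prod.mk.injEq] at hp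
    obtain ⟨⟨hS, hT, -⟩, -, ⟨rfl, rfl⟩⟩ := hp
    simp only [addTop_filter_le hS, addTop_filter_le hT]
  · rintro ⟨S, T⟩ hp
    simp only [coe_filter, Set.mem_ofPred_eq, mem_dominatingPairs] at hp
    simp only [filter_addTop a hp.1.1, filter_addTop b hp.1.2.1]

theorem card_excessPairs_succ (n d : ℕ) :
    #(excessPairs (n + 1) d) = 2 * #(excessPairs n d) + #(excessPairs n (d + 1))
      + #{p ∈ dominatingPairs n | #p.1 + 1 = #p.2 + d} := by
  rw [card_eq_sum_card_fiberwise (f := fun p => (decide (n + 1 ∈ p.1), decide (n + 1 ∈ p.2)))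
    (t := univ) fun _ _ => mem_univ _, ← univ_product_univ, sum_product]
  simp only [card_filter_excessPairs_succ, Fintype.sum_bool, Bool.toNat_true, Bool.toNat_false,
    add_zero]
  have h11 : #{p ∈ dominatingPairs n | #p.1 + 1 = #p.2 + 1 + d} = #(excessPairs n d) :=
    congrArg card (filter_congr fun p _ => by omega)
  have h01 : #{p ∈ dominatingPairs n | #p.1 = #p.2 + 1 + d} = #(excessPairs n (d + 1)) :=
    congrArg card (filter_congr fun p _ => by omega)
  rw [h11, h01]
  change _ + _ + (_ + #(excessPairs n d)) = _
  ring

theorem choose_add_two_add_two (m k : ℕ) :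
    (m + 2).choose (k + 2) = m.choose k + 2 * m.choose (k + 1) + m.choose (k + 2) := by
  simp only [Nat.choose_succ_succ]
  ring

theorem choose_add_choose_succ_eq_choose (n : ℕ) :
    (2 * n).choose n + (2 * n).choose (n + 1) = (2 * n + 1).choose n := by
  rw [← Nat.choose_symm_half, Nat.choose_succ_succ]

theorem centralBinom_succ_eq_two_mul_choose (n : ℕ) :
    (n + 1).centralBinom = 2 * (2 * n + 1).choose n := by
  rw [Nat.centralBinom, show 2 * (n + 1) = 2 * n + 1 + 1 by ring, Nat.choose_succ_succ,
    Nat.choose_symm_half]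
  ring

/-- The ballot count, stated additively to avoid truncated subtraction. -/
theorem card_excessPairs_add_choose (n d : ℕ) :
    #(excessPairs n d) + (2 * n).choose (n + d + 2) = (2 * n).choose (n + d) := by
  induction n generalizing d with
  | zero => rcases d with _ | d <;> simp [excessPairs, dominatingPairs_zero, filter_singleton]
  | succ n ih =>
    rw [card_excessPairs_succ]
    rcases d with _ | e
    · have h10 : #{p ∈ dominatingPairs n | #p.1 + 1 = #p.2 + 0} = 0 := by
        refine card_eq_zero.mpr (filter_eq_empty_iff.mpr fun p hp => ?_)
        have := (mem_dominatingPairs.mp hp).2.2.card_le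
        omega
      have ih0 : #(excessPairs n 0) + (2 * n).choose (n + 2) = (2 * n).choose n := ih 0
      have ih1 : #(excessPairs n 1) + (2 * n).choose (n + 3) = (2 * n).choose (n + 1) := ih 1
      have top : (2 * n + 2).choose (n + 3)
          = (2 * n).choose (n + 1) + 2 * (2 * n).choose (n + 2) + (2 * n).choose (n + 3) :=
        choose_add_two_add_two _ _
      have mid : (2 * n + 2).choose (n + 1) = 2 * (2 * n + 1).choose n :=
        centralBinom_succ_eq_two_mul_choose n
      have half := choose_add_choose_succ_eq_choose n
      rw [h10]
      change 2 * #(excessPairs n 0) + #(excessPairs n 1) + 0 + (2 * n + 2).choose (n + 3)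
        = (2 * n + 2).choose (n + 1)
      omega
    · have h10 : #{p ∈ dominatingPairs n | #p.1 + 1 = #p.2 + (e + 1)} = #(excessPairs n e) :=
        congrArg card (filter_congr fun p _ => by omega)
      have ih0 : #(excessPairs n e) + (2 * n).choose (n + e + 2) = (2 * n).choose (n + e) := ih e
      have ih1 : #(excessPairs n (e + 1)) + (2 * n).choose (n + e + 3)
          = (2 * n).choose (n + e + 1) := ih (e + 1)
      have ih2 : #(excessPairs n (e + 2)) + (2 * n).choose (n + e + 4)
          = (2 * n).choose (n + e + 2) := ih (e + 2)
      have top : (2 * n + 2).choose (n + e + 4) = (2 * n).choose (n + e + 2)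
          + 2 * (2 * n).choose (n + e + 3) + (2 * n).choose (n + e + 4) :=
        choose_add_two_add_two _ _
      have bot : (2 * n + 2).choose (n + e + 2) = (2 * n).choose (n + e)
          + 2 * (2 * n).choose (n + e + 1) + (2 * n).choose (n + e + 2) :=
        choose_add_two_add_two _ _
      rw [h10, show n + 1 + (e + 1) = n + e + 2 by ring]
      change 2 * #(excessPairs n (e + 1)) + #(excessPairs n (e + 2)) + #(excessPairs n e)
        + (2 * n + 2).choose (n + e + 4) = (2 * n + 2).choose (n + e + 2)
      omega

theorem card_dominatingPairs (n : ℕ) : #(dominatingPairs n) = (2 * n + 1).choose n := by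
  set g := fun k => (2 * n).choose (n + k)
  have hfibres : #(dominatingPairs n) = ∑ d ∈ range (n + 1), #(excessPairs n d) := by
    refine card_eq_sum_card_fiberwise (f := fun p => #p.1 - #p.2) (fun p hp => ?_) |>.trans
      (sum_congr rfl fun d _ => congrArg card (filter_congr fun p hp => ?_))
    · have := card_le_card (mem_dominatingPairs.mp hp).1
      rw [Nat.card_Icc] at this
      simp only [coe_range, Set.mem_Iio]
      omega
    · have := (mem_dominatingPairs.mp hp).2.2.card_le
      omega
  have htelescope (m : ℕ) :
      ∑ d ∈ range m, #(excessPairs n d) + g m + g (m + 1) = g 0 + g 1 := by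
    induction m with
    | zero => simp
    | succ m ih =>
      have h : #(excessPairs n m) + g (m + 1 + 1) = g m := card_excessPairs_add_choose n m
      rw [sum_range_succ]
      omega
  have hg (k : ℕ) : g (n + 1 + k) = 0 := Nat.choose_eq_zero_of_lt (by omega)
  have := htelescope (n + 1)
  rw [hg 0, hg 1, ← hfibres, add_zero, add_zero] at this
  exact this.trans (choose_add_choose_succ_eq_choose n)

theorem dominates_empty (S : Finset ℕ) : Dominates S ∅ := fun k => by simp

open Classical in
theorem card_filter_dominates_columnSets_add_two_pow (n : ℕ) :
    #{q ∈ columnSets n ×ˢ columnSets n | Dominates q.1 q.2} + 2 ^ n = #(dominatingPairs n) := by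
  have hne : {q ∈ dominatingPairs n | q.2 ≠ ∅}
      = {q ∈ columnSets n ×ˢ columnSets n | Dominates q.1 q.2} := by
    ext ⟨S, T⟩
    simp only [mem_filter, mem_dominatingPairs, mem_product, columnSets, mem_erase, mem_powerset]
    constructor
    · rintro ⟨⟨hS, hT, h⟩, hT0⟩
      refine ⟨⟨⟨fun hS0 => hT0 ?_, hS⟩, hT0, hT⟩, h⟩
      simpa [hS0] using h.card_le
    · rintro ⟨⟨⟨-, hS⟩, hT0, hT⟩, h⟩
      exact ⟨⟨hS, hT, h⟩, hT0⟩
  have hempty : {q ∈ dominatingPairs n | ¬q.2 ≠ ∅} = (Icc 1 n).powerset ×ˢ {∅} := by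
    ext ⟨S, T⟩
    simp only [mem_filter, mem_dominatingPairs, mem_product, mem_powerset, mem_singleton, not_not]
    constructor
    · rintro ⟨⟨hS, -, -⟩, rfl⟩
      exact ⟨hS, rfl⟩
    · rintro ⟨hS, rfl⟩
      exact ⟨⟨hS, empty_subset _, dominates_empty S⟩, rfl⟩
  rw [← card_filter_add_card_filter_not (s := dominatingPairs n) (fun q => q.2 ≠ ∅), hne,
    hempty, card_product, card_powerset, Nat.card_Icc, Nat.add_sub_cancel, card_singleton, mul_one]

theorem prod_Icc_div_telescope {G : Type*} [CommGroupWithZero G] {f : ℕ → G}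
    (hf : ∀ i, 1 ≤ i → f i ≠ 0) (m : ℕ) :
    ∏ i ∈ Icc 1 m, f (i + 1) / f i = f (m + 1) / f 1 := by
  induction m with
  | zero => simp [div_self (hf 1 le_rfl)]
  | succ m ih =>
    rw [prod_Icc_succ_top (by omega), ih]
    exact div_mul_div_cancel₀' (hf (m + 1) (by omega)) _ _

theorem gordon_eq_prod_prod (n q : ℕ) :
    gordon n q =
      ∏ j ∈ Icc 1 n, ∏ i ∈ Icc 1 j, ((q : ℚ) + i + j - 1) / ((i : ℚ) + j - 1) := by
  rw [gordon]
  exact prod_finset_product_right'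
    (f := fun (i j : ℕ) => ((q : ℚ) + i + j - 1) / ((i : ℚ) + j - 1)) _ _ _ fun p => by
      simp only [mem_filter, mem_product, mem_Icc]
      omega

theorem gordon_one (n : ℕ) : gordon n 1 = 2 ^ n := by
  suffices ∀ j ∈ Icc 1 n,
      ∏ i ∈ Icc 1 j, ((1 : ℕ) + i + j - 1 : ℚ) / ((i : ℚ) + j - 1) = 2 by
    rw [gordon_eq_prod_prod, prod_congr rfl this, prod_const, Nat.card_Icc, Nat.add_sub_cancel]
  intro j hj
  have hj0 : (j : ℚ) ≠ 0 := by exact_mod_cast (Nat.one_le_iff_ne_zero.mp (mem_Icc.mp hj).1)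
  have hpos (i : ℕ) (hi : 1 ≤ i) : (i : ℚ) + j - 1 ≠ 0 := by
    have : (1 : ℚ) ≤ i := by exact_mod_cast hi
    have : (0 : ℚ) < j := by positivity
    linarith
  calc ∏ i ∈ Icc 1 j, ((1 : ℕ) + i + j - 1 : ℚ) / ((i : ℚ) + j - 1)
      = ∏ i ∈ Icc 1 j, (((i + 1 : ℕ) : ℚ) + j - 1) / ((i : ℚ) + j - 1) :=
        prod_congr rfl fun i _ => by push_cast; ring
    _ = (((j + 1 : ℕ) : ℚ) + j - 1) / ((1 : ℕ) + j - 1) := prod_Icc_div_telescope hpos j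
    _ = 2 := by rw [div_eq_iff (by push_cast; simpa using hj0)]; push_cast; ring

theorem centralBinom_succ_div (j : ℕ) :
    ((j + 1).centralBinom : ℚ) / j.centralBinom = 2 * (2 * j + 1) / (j + 1) := by
  have h := Nat.succ_mul_centralBinom_succ j
  have hc : (j.centralBinom : ℚ) ≠ 0 := by exact_mod_cast j.centralBinom_ne_zero
  rw [div_eq_div_iff hc (by positivity)]
  exact_mod_cast (by linarith [h] :
    (j + 1).centralBinom * (j + 1) = 2 * (2 * j + 1) * j.centralBinom)

theorem gordon_two (n : ℕ) : gordon n 2 = (2 * n + 1).choose n := by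
  suffices ∀ j ∈ Icc 1 n, ∏ i ∈ Icc 1 j, ((2 : ℕ) + i + j - 1 : ℚ) / ((i : ℚ) + j - 1)
      = ((j + 1).centralBinom : ℚ) / j.centralBinom by
    rw [gordon_eq_prod_prod, prod_congr rfl this,
      prod_Icc_div_telescope (f := fun j => (j.centralBinom : ℚ))
        (fun j _ => by exact_mod_cast j.centralBinom_ne_zero)]
    rw [centralBinom_succ_eq_two_mul_choose, show Nat.centralBinom 1 = 2 from rfl]
    push_cast
    ring
  intro j hj
  have hj0 : (j : ℚ) ≠ 0 := by exact_mod_cast (Nat.one_le_iff_ne_zero.mp (mem_Icc.mp hj).1)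
  have hpos (i : ℕ) (hi : 1 ≤ i) : ((i : ℚ) + j - 1) * ((i : ℚ) + j) ≠ 0 := by
    have : (1 : ℚ) ≤ i := by exact_mod_cast hi
    have : (0 : ℚ) < j := by positivity
    apply mul_ne_zero <;> linarith
  calc ∏ i ∈ Icc 1 j, ((2 : ℕ) + i + j - 1 : ℚ) / ((i : ℚ) + j - 1)
      = ∏ i ∈ Icc 1 j, ((((i + 1 : ℕ) : ℚ) + j - 1) * (((i + 1 : ℕ) : ℚ) + j)) /
          (((i : ℚ) + j - 1) * ((i : ℚ) + j)) :=
        prod_congr rfl fun i hi => by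
          have : (i : ℚ) + j ≠ 0 := by positivity
          push_cast
          field_simp
          ring
    _ = ((((j + 1 : ℕ) : ℚ) + j - 1) * (((j + 1 : ℕ) : ℚ) + j)) /
          ((((1 : ℕ) : ℚ) + j - 1) * (((1 : ℕ) : ℚ) + j)) := prod_Icc_div_telescope hpos j
    _ = _ := by
      rw [centralBinom_succ_div]
      push_cast
      rw [show (1 : ℚ) + j - 1 = j by ring]
      field_simp
      ring

theorem card_column_two_cells_general (n : ℕ) :
    ({p : List ℕ × List ℕ | IsColumn n p.1 ∧ IsColumn n p.2 ∧ ¬ TabPair p.1 p.2}.ncard : ℚ)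
      = ((2 : ℚ) ^ n - 1) ^ 2 - (gordon n 2 - gordon n 1) ∧
    ({p : List ℕ × List ℕ | IsColumn n p.1 ∧ IsColumn n p.2 ∧ TabPair p.1 p.2}.ncard : ℚ)
      = gordon n 2 - gordon n 1 := by
  classical
  have hgordon : gordon n 2 - gordon n 1
      = #{q ∈ columnSets n ×ˢ columnSets n | Dominates q.1 q.2} := by
    have := card_filter_dominates_columnSets_add_two_pow n
    rw [card_dominatingPairs] at this
    rw [gordon_two, gordon_one, ← this]
    push_cast
    ring
  have hpairs := card_filter_add_card_filter_not (s := columnSets n ×ˢ columnSets n)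
    (fun q => Dominates q.1 q.2)
  rw [card_product, card_columnSets] at hpairs
  have hpairsQ := congrArg (Nat.cast : ℕ → ℚ) hpairs
  push_cast [Nat.one_le_two_pow] at hpairsQ
  have hTab := ncard_columnPairs n TabPair
  have hNot := ncard_columnPairs n fun u v => ¬TabPair u v
  simp only [tabPair_colList_iff] at hTab hNot
  rw [hTab, hNot, hgordon]
  exact ⟨by linear_combination hpairsQ, rfl⟩

/-- The number of 2-cells of the column presentation of `P_n`, i.e. of pairs of
columns that do not form a tableau configuration, is
`(2^n - 1)^2 - (T_2(n) - T_1(n))`; equivalently, the number of pairs of columns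
forming a tableau configuration is `T_2(n) - T_1(n)`. -/
theorem card_column_two_cells (n : ℕ) (hn : 0 < n) :
    ({p : List ℕ × List ℕ | IsColumn n p.1 ∧ IsColumn n p.2 ∧ ¬ TabPair p.1 p.2}.ncard : ℚ)
      = ((2 : ℚ) ^ n - 1) ^ 2 - (gordon n 2 - gordon n 1) ∧
    ({p : List ℕ × List ℕ | IsColumn n p.1 ∧ IsColumn n p.2 ∧ TabPair p.1 p.2}.ncard : ℚ)
      = gordon n 2 - gordon n 1 :=
  card_column_two_cells_general n
end
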